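/- L² bound on the velocity gradient: let μ > 0, k > 0, α* ∈ (0,1), L > 0 and s ≤ 0. Suppose α, u : [0, L] → ℝ are continuously differentiable with α_ℓ ≤ α(x) ≤ α_u for constants 0 < α_ℓ ≤ α_u < 1, the map x ↦ α(x) u′(x) is differentiable, −μ (α u′)′ + k α u/(1−α) = −(α Σ(α))′ on (0, L), u(0) = 0, u(L) ≥ 0, and μ u′(L) − Σ(α(L)) = s. Then μ α_ℓ (∫₀^L (u′(x))² dx)^{1/2} ≤ √L · α_u (α_u − α*)⁺/(1 − α_u)². -/

import Mathlib

/-!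
Multiplying the momentum equation by `u` and integrating by parts (with `u(0) = 0`) gives
`∫ (k α u²/(1-α) + μ α u'² - α Σ(α) u') = α(L) u(L) s ≤ 0`, since the hydrogel is compressive.
Dropping the drag term, `μ α_ℓ ‖u'‖₂² ≤ ∫ α Σ(α) |u'| ≤ α_u Σ(α_u) ‖u'‖₁`, because `a ↦ a Σ(a)` is
increasing on `[0, 1)`, and Cauchy–Schwarz `‖u'‖₁ ≤ √L ‖u'‖₂` finishes the bound.
-/

/-- Cell–cell interaction pressure `Σ(α) = (α − α*)⁺ / (1 − α)²`. -/
noncomputable def cellPressure (αstar a : ℝ) : ℝ := max (a - αstar) 0 / (1 - a) ^ 2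

open Set intervalIntegral

theorem integral_abs_le_sqrt_mul_sqrt_integral_sq {a b : ℝ} {f : ℝ → ℝ} (hab : a ≤ b)
    (hf : ContinuousOn f (Icc a b)) :
    ∫ x in a..b, |f x| ≤ √(b - a) * √(∫ x in a..b, f x ^ 2) := by
  rw [← uIcc_of_le hab] at hf
  have habs : IntervalIntegrable (fun x => |f x|) MeasureTheory.volume a b :=
    hf.abs.intervalIntegrable
  have hsq : IntervalIntegrable (fun x => f x ^ 2) MeasureTheory.volume a b :=
    (hf.pow 2).intervalIntegrable
  set A := ∫ x in a..b, |f x|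
  set B := ∫ x in a..b, f x ^ 2
  -- `t ↦ ∫ (t - |f|)²` is a nonnegative quadratic, so its discriminant is nonpositive.
  have hquad : ∀ t : ℝ, 0 ≤ (b - a) * (t * t) + (-2 * A) * t + B := by
    intro t
    have hexpand : ∫ x in a..b, (t - |f x|) ^ 2 = (b - a) * (t * t) + (-2 * A) * t + B := by
      simp_rw [sub_sq, sq_abs]
      rw [integral_add (intervalIntegrable_const.sub (habs.const_mul _)) hsq,
        integral_sub intervalIntegrable_const (habs.const_mul _), integral_const,
        integral_const_mul]
      simp only [smul_eq_mul]
      ring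
    exact hexpand ▸ integral_nonneg hab fun x _ => sq_nonneg _
  have hA : 0 ≤ A := integral_nonneg hab fun x _ => abs_nonneg _
  have hAB : A ^ 2 ≤ (b - a) * B := by
    have := discrim_le_zero hquad
    rw [discrim] at this
    nlinarith
  rw [← Real.sqrt_mul (sub_nonneg.2 hab)]
  exact (Real.le_sqrt hA (by nlinarith)).2 hAB

theorem integral_mul_deriv_nonpos {a b : ℝ} {G G' u u' : ℝ → ℝ} (hab : a ≤ b)
    (hG : ∀ x ∈ Icc a b, HasDerivAt G (G' x) x) (hu : ∀ x ∈ Icc a b, HasDerivAt u (u' x) x)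
    (hu' : ContinuousOn u' (Icc a b)) (hsign : ∀ x ∈ Ioo a b, 0 ≤ G' x * u x)
    (ha : u a = 0) (hb : G b * u b ≤ 0) :
    ∫ x in a..b, G x * u' x ≤ 0 := by
  have hGc : ContinuousOn G (Icc a b) := fun x hx => (hG x hx).continuousAt.continuousWithinAt
  have huc : ContinuousOn u (Icc a b) := fun x hx => (hu x hx).continuousAt.continuousWithinAt
  calc ∫ x in a..b, G x * u' x
      ≤ G b * u b - G a * u a :=
        integral_le_sub_of_hasDeriv_right_of_le hab (hGc.mul huc)
          (fun x hx => ((hG x (Ioo_subset_Icc_self hx)).mul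
            (hu x (Ioo_subset_Icc_self hx))).hasDerivWithinAt)
          ((hGc.mul hu').integrableOn_Icc) fun x hx => le_add_of_nonneg_left (hsign x hx)
    _ ≤ 0 := by rw [ha, mul_zero, sub_zero]; exact hb

theorem mul_integral_sq_le_mul_integral_abs_of_integral_nonpos {a b c C : ℝ} {f g : ℝ → ℝ}
    (hab : a ≤ b) (hf : ContinuousOn f (Icc a b))
    (hg : IntervalIntegrable g MeasureTheory.volume a b)
    (hfg : ∀ x ∈ Icc a b, c * f x ^ 2 - C * |f x| ≤ g x) (hg0 : ∫ x in a..b, g x ≤ 0) :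
    c * ∫ x in a..b, f x ^ 2 ≤ C * ∫ x in a..b, |f x| := by
  have hsq : IntervalIntegrable (fun x => f x ^ 2) MeasureTheory.volume a b :=
    (hf.pow 2).intervalIntegrable_of_Icc hab
  have habs : IntervalIntegrable (fun x => |f x|) MeasureTheory.volume a b :=
    hf.abs.intervalIntegrable_of_Icc hab
  have h := (integral_mono_on hab ((hsq.const_mul c).sub (habs.const_mul C)) hg hfg).trans hg0
  rw [integral_sub (hsq.const_mul c) (habs.const_mul C), integral_const_mul,
    integral_const_mul] at h
  linarith

theorem mul_sqrt_integral_sq_le_of_le_mul_integral_abs {a b c C : ℝ} {f : ℝ → ℝ} (hab : a ≤ b)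
    (hf : ContinuousOn f (Icc a b)) (hC : 0 ≤ C)
    (h : c * ∫ x in a..b, f x ^ 2 ≤ C * ∫ x in a..b, |f x|) :
    c * √(∫ x in a..b, f x ^ 2) ≤ √(b - a) * C := by
  set N := √(∫ x in a..b, f x ^ 2)
  have hN : N ^ 2 = ∫ x in a..b, f x ^ 2 :=
    Real.sq_sqrt (integral_nonneg hab fun x _ => sq_nonneg _)
  have hquad : c * N * N ≤ √(b - a) * C * N :=
    calc c * N * N = c * ∫ x in a..b, f x ^ 2 := by rw [mul_assoc, ← sq, hN]
      _ ≤ C * ∫ x in a..b, |f x| := h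
      _ ≤ C * (√(b - a) * N) :=
        mul_le_mul_of_nonneg_left (integral_abs_le_sqrt_mul_sqrt_integral_sq hab hf) hC
      _ = √(b - a) * C * N := by ring
  have hN_nonneg : 0 ≤ N := Real.sqrt_nonneg _
  rcases hN_nonneg.eq_or_lt with hN0 | hNpos
  · rw [← hN0, mul_zero]
    positivity
  · exact le_of_mul_le_mul_right hquad hNpos

theorem cellPressure_nonneg (αstar a : ℝ) : 0 ≤ cellPressure αstar a := by
  unfold cellPressure; positivity

theorem mul_cellPressure_le_mul_cellPressure {αstar a b : ℝ} (ha : 0 ≤ a) (hab : a ≤ b)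
    (hb : b < 1) : a * cellPressure αstar a ≤ b * cellPressure αstar b := by
  unfold cellPressure
  gcongr
  exact ha.trans hab

theorem mul_sq_sub_cellPressure_mul_abs_le {μ αstar αl αu a y : ℝ} (hμ : 0 ≤ μ) (hαl : 0 ≤ αl)
    (hla : αl ≤ a) (hau : a ≤ αu) (hαu : αu < 1) :
    μ * αl * y ^ 2 - αu * cellPressure αstar αu * |y|
      ≤ (μ * (a * y) - a * cellPressure αstar a) * y := by
  have hdrag : μ * αl * y ^ 2 ≤ μ * a * y ^ 2 := by gcongr
  have hpress : a * cellPressure αstar a * y ≤ αu * cellPressure αstar αu * |y| :=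
    calc a * cellPressure αstar a * y ≤ a * cellPressure αstar a * |y| := by
          gcongr
          · exact mul_nonneg (hαl.trans hla) (cellPressure_nonneg _ _)
          · exact le_abs_self _
      _ ≤ αu * cellPressure αstar αu * |y| :=
          mul_le_mul_of_nonneg_right
            (mul_cellPressure_le_mul_cellPressure (hαl.trans hla) hau hαu) (abs_nonneg y)
  linarith

theorem velocity_gradient_L2_bound_general
    (μ k αstar L s αl αu : ℝ)
    (hμ : 0 < μ) (hk : 0 < k) (hL : 0 < L)
    (hs : s ≤ 0)
    (hαl : 0 < αl) (hαlu : αl ≤ αu) (hαu : αu < 1)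
    (α u u' w v : ℝ → ℝ)
    (hu : ∀ x ∈ Set.Icc 0 L, HasDerivAt u (u' x) x)
    (huc : ContinuousOn u' (Set.Icc 0 L))
    (hαrange : ∀ x ∈ Set.Icc 0 L, αl ≤ α x ∧ α x ≤ αu)
    (hw : ∀ x ∈ Set.Icc 0 L, HasDerivAt (fun y => α y * u' y) (w x) x)
    (hv : ∀ x ∈ Set.Icc 0 L,
      HasDerivAt (fun y => α y * cellPressure αstar (α y)) (v x) x)
    (heq : ∀ x ∈ Set.Ioo 0 L,
      -μ * w x + k * α x * u x / (1 - α x) = -v x)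
    (hu0 : u 0 = 0) (huL : 0 ≤ u L)
    (hbc : μ * u' L - cellPressure αstar (α L) = s) :
    μ * αl * Real.sqrt (∫ x in (0:ℝ)..L, (u' x) ^ 2)
      ≤ Real.sqrt L * (αu * max (αu - αstar) 0 / (1 - αu) ^ 2) := by
  set G : ℝ → ℝ := fun y => μ * (α y * u' y) - α y * cellPressure αstar (α y)
  have hG : ∀ x ∈ Icc 0 L, HasDerivAt G (μ * w x - v x) x :=
    fun x hx => ((hw x hx).const_mul μ).sub (hv x hx)
  have henergy : ∫ x in (0:ℝ)..L, G x * u' x ≤ 0 := by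
    refine integral_mul_deriv_nonpos hL.le hG hu huc (fun x hx => ?_) hu0 ?_
    · have hαx := hαrange x (Ioo_subset_Icc_self hx)
      have h1α : 0 < 1 - α x := by linarith
      rw [show μ * w x - v x = k * α x * u x / (1 - α x) by linarith [heq x hx],
        show k * α x * u x / (1 - α x) * u x = k * α x / (1 - α x) * u x ^ 2 by ring]
      have : 0 ≤ α x := by linarith
      positivity
    · rw [show G L = α L * s by rw [← hbc]; ring]
      exact mul_nonpos_of_nonpos_of_nonneg
        (mul_nonpos_of_nonneg_of_nonpos (by linarith [(hαrange L ⟨hL.le, le_rfl⟩).1]) hs) huL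
  have hGc : ContinuousOn G (Icc 0 L) := fun x hx => (hG x hx).continuousAt.continuousWithinAt
  have hdissip := mul_integral_sq_le_mul_integral_abs_of_integral_nonpos hL.le huc
    ((hGc.mul huc).intervalIntegrable_of_Icc hL.le) (fun x hx =>
      mul_sq_sub_cellPressure_mul_abs_le hμ.le hαl.le (hαrange x hx).1 (hαrange x hx).2 hαu)
    henergy
  have hbound := mul_sqrt_integral_sq_le_of_le_mul_integral_abs hL.le huc
    (mul_nonneg (by linarith) (cellPressure_nonneg _ _)) hdissip
  rw [sub_zero] at hbound
  rwa [mul_div_assoc]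

/-- L² bound on the velocity gradient for a compressive hydrogel stress `s ≤ 0`. -/
theorem velocity_gradient_L2_bound
    (μ k αstar L s αl αu : ℝ)
    (hμ : 0 < μ) (hk : 0 < k) (hαstar : αstar ∈ Set.Ioo (0 : ℝ) 1) (hL : 0 < L)
    (hs : s ≤ 0)
    (hαl : 0 < αl) (hαlu : αl ≤ αu) (hαu : αu < 1)
    (α u α' u' w v : ℝ → ℝ)
    (hα : ∀ x ∈ Set.Icc 0 L, HasDerivAt α (α' x) x)
    (hαc : ContinuousOn α' (Set.Icc 0 L))
    (hu : ∀ x ∈ Set.Icc 0 L, HasDerivAt u (u' x) x)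
    (huc : ContinuousOn u' (Set.Icc 0 L))
    (hαrange : ∀ x ∈ Set.Icc 0 L, αl ≤ α x ∧ α x ≤ αu)
    (hw : ∀ x ∈ Set.Icc 0 L, HasDerivAt (fun y => α y * u' y) (w x) x)
    (hv : ∀ x ∈ Set.Icc 0 L,
      HasDerivAt (fun y => α y * cellPressure αstar (α y)) (v x) x)
    (heq : ∀ x ∈ Set.Ioo 0 L,
      -μ * w x + k * α x * u x / (1 - α x) = -v x)
    (hu0 : u 0 = 0) (huL : 0 ≤ u L)
    (hbc : μ * u' L - cellPressure αstar (α L) = s) :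
    μ * αl * Real.sqrt (∫ x in (0:ℝ)..L, (u' x) ^ 2)
      ≤ Real.sqrt L * (αu * max (αu - αstar) 0 / (1 - αu) ^ 2) :=
  velocity_gradient_L2_bound_general μ k αstar L s αl αu hμ hk hL hs hαl hαlu hαu α u u' w v hu huc
    hαrange hw hv heq hu0 huL hbc
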